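/- For all x in (-1,1), the sum over k ≥ 1 of binomial(2k, k) * x^{2k} / (2^{2k} * 2k) equals log 2 - log(1 + sqrt(1 - x^2)). -/

import Mathlib

/-!
The coefficients `c k = (2k choose k) / 4 ^ k` are those of the binomial series of
`(1 - t) ^ (-1/2)`. Differentiating `∑ c (k+1) t ^ (k+1) / (2(k+1))` termwise gives
`(1 / √(1 - t) - 1) / (2t) = 1 / (2 √(1 - t) (1 + √(1 - t)))`, which is also the derivative of
`log 2 - log (1 + √(1 - t))`; both functions vanish at `0`, so they agree on `|t| < 1`.
The theorem is the case `t = x ^ 2`.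
-/
open Real Set Metric

theorem ascPochhammer_eval_one_half (n : ℕ) :
    (ascPochhammer ℝ n).eval (1 / 2) = n.factorial * n.centralBinom / 4 ^ n := by
  induction n with
  | zero => simp
  | succ n ih =>
    have h : ((n + 1 : ℕ) : ℝ) * (n + 1).centralBinom = 2 * (2 * n + 1) * n.centralBinom := by
      exact_mod_cast Nat.succ_mul_centralBinom_succ n
    rw [ascPochhammer_succ_eval, ih, Nat.factorial_succ, Nat.cast_mul, mul_right_comm, h]
    field_simp
    ring

theorem Ring.multichoose_one_half (n : ℕ) :
    Ring.multichoose (1 / 2 : ℝ) n = n.centralBinom / 4 ^ n := by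
  have h := Ring.factorial_nsmul_multichoose_eq_ascPochhammer (1 / 2 : ℝ) n
  rw [Polynomial.ascPochhammer_smeval_eq_eval, ascPochhammer_eval_one_half, nsmul_eq_mul] at h
  have : (n.factorial : ℝ) ≠ 0 := by positivity
  field_simp at h ⊢
  linear_combination h

theorem hasSum_centralBinom_div_four_pow_mul_pow {t : ℝ} (ht : |t| < 1) :
    HasSum (fun n : ℕ => (n.centralBinom : ℝ) / 4 ^ n * t ^ n) (1 / √(1 - t)) := by
  have h := (one_div_one_sub_rpow_hasFPowerSeriesOnBall_zero (1 / 2)).hasSum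
    (y := t) (by simpa [enorm_eq_nnnorm, ← NNReal.coe_lt_coe] using ht)
  simp only [FormalMultilinearSeries.ofScalars_apply_eq, zero_add, smul_eq_mul,
    ← Ring.multichoose_eq, Ring.multichoose_one_half] at h
  rwa [sqrt_eq_rpow]

theorem hasDerivAt_div_succ_mul_pow_succ (c : ℝ) (k : ℕ) (s : ℝ) :
    HasDerivAt (fun s : ℝ => c / (k + 1) * s ^ (k + 1)) (c * s ^ k) s := by
  refine ((hasDerivAt_pow (k + 1) s).const_mul (c / (k + 1))).congr_deriv ?_
  rw [Nat.add_sub_cancel]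
  push_cast
  field_simp

section BoundedCoefficients

variable {a : ℕ → ℝ} {C : ℝ}

theorem summable_div_succ_mul_pow_succ (ha : ∀ k, |a k| ≤ C) {t : ℝ} (ht : |t| < 1) :
    Summable (fun k : ℕ => a k / (k + 1) * t ^ (k + 1)) := by
  refine .of_norm_bounded ((summable_geometric_of_lt_one (abs_nonneg t) ht).mul_left C) fun k => ?_
  rw [norm_mul, norm_div, norm_pow, Real.norm_eq_abs, Real.norm_eq_abs, pow_succ]
  have hk : (1 : ℝ) ≤ ‖(k : ℝ) + 1‖ := by
    rw [Real.norm_of_nonneg (by positivity)]; simp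
  calc |a k| / ‖(k : ℝ) + 1‖ * (|t| ^ k * |t|) ≤ C * (|t| ^ k * 1) := by
        gcongr
        · exact (abs_nonneg _).trans (ha 0)
        · exact (div_le_self (abs_nonneg _) hk).trans (ha k)
    _ = C * |t| ^ k := by rw [mul_one]

theorem hasDerivAt_tsum_div_succ_mul_pow_succ (ha : ∀ k, |a k| ≤ C) {t : ℝ} (ht : |t| < 1) :
    HasDerivAt (fun s => ∑' k : ℕ, a k / (k + 1) * s ^ (k + 1)) (∑' k : ℕ, a k * t ^ k) t := by
  obtain ⟨r, htr, hr1⟩ := exists_between ht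
  have hr0 : 0 < r := (abs_nonneg t).trans_lt htr
  have hbound : ∀ k (s : ℝ), s ∈ ball 0 r → ‖a k * s ^ k‖ ≤ C * r ^ k := fun k s hs => by
    rw [mem_ball_zero_iff] at hs
    rw [norm_mul, norm_pow, Real.norm_eq_abs]
    gcongr
    exacts [(abs_nonneg _).trans (ha 0), ha k]
  exact hasDerivAt_tsum_of_isPreconnected
    ((summable_geometric_of_lt_one hr0.le hr1).mul_left C)
    isOpen_ball (convex_ball 0 r).isPreconnected
    (fun k s _ => hasDerivAt_div_succ_mul_pow_succ (a k) k s) hbound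
    (mem_ball_self hr0) (by simp) (by simpa using htr)

end BoundedCoefficients

theorem hasDerivAt_log_one_add_sqrt_one_sub {t : ℝ} (ht : t < 1) :
    HasDerivAt (fun s => log (1 + √(1 - s))) (-1 / (2 * √(1 - t) * (1 + √(1 - t)))) t := by
  have hsqrt : 0 < √(1 - t) := sqrt_pos.2 (by linarith)
  have h := (((hasDerivAt_id' t).const_sub 1).sqrt (by linarith)).const_add 1 |>.log (by positivity)
  convert h using 1
  field_simp

theorem hasSum_centralBinom_succ_div_four_pow_mul_pow {t : ℝ} (ht : |t| < 1) :
    HasSum (fun k : ℕ => ((k + 1).centralBinom : ℝ) / 4 ^ (k + 1) * t ^ k)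
      (1 / (√(1 - t) * (1 + √(1 - t)))) := by
  rcases eq_or_ne t 0 with rfl | ht0
  · have h := hasSum_single (f := fun k : ℕ => ((k + 1).centralBinom : ℝ) / 4 ^ (k + 1) * 0 ^ k) 0
      fun k hk => by simp [hk]
    norm_num [Nat.centralBinom] at h ⊢
    exact h
  have hsqrt : 0 < √(1 - t) := sqrt_pos.2 (by linarith [le_abs_self t])
  have hsq : √(1 - t) ^ 2 = 1 - t := sq_sqrt (by linarith [le_abs_self t])
  have h := ((hasSum_nat_add_iff' 1).mpr (hasSum_centralBinom_div_four_pow_mul_pow ht)).div_const t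
  have hval : (1 / √(1 - t) - ∑ i ∈ Finset.range 1, (i.centralBinom : ℝ) / 4 ^ i * t ^ i) / t
      = 1 / (√(1 - t) * (1 + √(1 - t))) := by
    simp only [Finset.sum_range_one, Nat.centralBinom_zero]
    field_simp
    linear_combination -hsq
  rw [hval] at h
  exact h.congr_fun fun k => by field_simp; ring

theorem hasSum_log_two_sub_log_one_add_sqrt_one_sub {t : ℝ} (ht : |t| < 1) :
    HasSum (fun k : ℕ => ((k + 1).centralBinom : ℝ) / 4 ^ (k + 1) / 2 / (k + 1) * t ^ (k + 1))
      (log 2 - log (1 + √(1 - t))) := by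
  set a : ℕ → ℝ := fun k => ((k + 1).centralBinom : ℝ) / 4 ^ (k + 1) / 2
  have ha : ∀ k, |a k| ≤ 1 := fun k => by
    have h : ((k + 1).centralBinom : ℝ) ≤ 4 ^ (k + 1) := by
      exact_mod_cast Nat.centralBinom_le_four_pow (k + 1)
    have : (0 : ℝ) < 4 ^ (k + 1) := by positivity
    simp only [a]
    rw [abs_of_nonneg (by positivity), div_div, div_le_one (by positivity)]
    linarith
  set F := fun s => ∑' k : ℕ, a k / (k + 1) * s ^ (k + 1)
  set G := fun s => log 2 - log (1 + √(1 - s))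
  set g := fun s => 1 / (√(1 - s) * (1 + √(1 - s))) / 2
  have hF : ∀ s ∈ ball (0 : ℝ) 1, HasDerivAt F (g s) s := fun s hs => by
    rw [mem_ball_zero_iff, Real.norm_eq_abs] at hs
    have hsum : HasSum (fun k => a k * s ^ k) (g s) :=
      ((hasSum_centralBinom_succ_div_four_pow_mul_pow hs).div_const 2).congr_fun
        fun k => by simp only [a]; ring
    exact (hasDerivAt_tsum_div_succ_mul_pow_succ ha hs).congr_deriv hsum.tsum_eq
  have hG : ∀ s ∈ ball (0 : ℝ) 1, HasDerivAt G (g s) s := fun s hs => by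
    rw [mem_ball_zero_iff, Real.norm_eq_abs] at hs
    refine ((hasDerivAt_log_one_add_sqrt_one_sub (lt_of_abs_lt hs)).const_sub (log 2)).congr_deriv ?_
    have : 0 < √(1 - s) := sqrt_pos.2 (by linarith [le_abs_self s])
    simp only [g]
    field_simp
  have hFG : EqOn F G (ball 0 1) :=
    isOpen_ball.eqOn_of_deriv_eq (convex_ball 0 1).isPreconnected
      (fun s hs => (hF s hs).differentiableAt.differentiableWithinAt)
      (fun s hs => (hG s hs).differentiableAt.differentiableWithinAt)
      (fun s hs => (hF s hs).deriv.trans (hG s hs).deriv.symm) (mem_ball_self one_pos)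
      (by norm_num [F, G])
  show HasSum _ (G t)
  rw [← hFG (by simpa using ht)]
  exact (summable_div_succ_mul_pow_succ ha ht).hasSum

theorem stmt_0 (x : ℝ) (hx : x ∈ Set.Ioo (-1 : ℝ) 1) :
    HasSum (fun k : ℕ =>
      (Nat.choose (2 * (k + 1)) (k + 1) : ℝ) * x ^ (2 * (k + 1)) /
        (2 ^ (2 * (k + 1)) * (2 * (k + 1))))
      (Real.log 2 - Real.log (1 + Real.sqrt (1 - x ^ 2))) := by
  have hx2 : |x ^ 2| < 1 := by
    rw [abs_pow, sq_abs, sq_lt_one_iff_abs_lt_one]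
    exact abs_lt.2 hx
  refine (hasSum_log_two_sub_log_one_add_sqrt_one_sub hx2).congr_fun fun k => ?_
  rw [pow_mul, pow_mul, Nat.centralBinom_eq_two_mul_choose]
  field_simp
  ring
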